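/- arXiv:2212.04301 — 7 statements merged into one kernel-verified Lean document; each statement's English description precedes it below -/
import Mathlib

section
/- Let d, s, λ₁, μ₁, r₂, h, b, a, ε > 0 with h < 1, a > 1, λ₁ < μ₁ < 2λ₁, d·λ₁² - s·λ₁ + r₂(1-h) = 0, and A₁(μ₁) := d·μ₁² - s·μ₁ + r₂(1-h) < 0. Suppose q₁ > max{1, r₂(ε + 1 + b(2a-1))/(-A₁(μ₁))}, and let α : ℝ → ℝ satisfy -ε·e^{λ₁ z} ≤ α(z) ≤ 0 for z < 0. Define ψ(z) = e^{λ₁ z} - q₁·e^{μ₁ z}. Then for every z < 0 with ψ(z) > 0, one has d·ψ''(z) - s·ψ'(z) + r₂·ψ(z)·[1 + α(z) - h(1 - e^{λ₁ z}) - ψ(z) - b(2a-1)e^{λ₁ z}] ≥ 0. -/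
lemma exp_mul_hasDerivAt (c x : ℝ) :
    HasDerivAt (fun z => Real.exp (c * z)) (c * Real.exp (c * x)) x := by
  simpa [mul_comm, Function.comp_def] using (Real.hasDerivAt_exp (c * x)).comp x
    ((hasDerivAt_id x).const_mul c)

lemma deriv_psi (ld₁ μ₁ q₁ : ℝ) :
    deriv (fun z => Real.exp (ld₁ * z) - q₁ * Real.exp (μ₁ * z)) =
      fun z => ld₁ * Real.exp (ld₁ * z) - q₁ * (μ₁ * Real.exp (μ₁ * z)) := by
  funext x
  exact ((exp_mul_hasDerivAt ld₁ x).sub ((exp_mul_hasDerivAt μ₁ x).const_mul q₁)).deriv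

lemma deriv2_psi (ld₁ μ₁ q₁ : ℝ) (x : ℝ) :
    deriv (deriv (fun z => Real.exp (ld₁ * z) - q₁ * Real.exp (μ₁ * z))) x =
      ld₁ * (ld₁ * Real.exp (ld₁ * x)) - q₁ * (μ₁ * (μ₁ * Real.exp (μ₁ * x))) := by
  rw [deriv_psi]
  exact (((exp_mul_hasDerivAt ld₁ x).const_mul ld₁).sub
    (((exp_mul_hasDerivAt μ₁ x).const_mul μ₁).const_mul q₁)).deriv

theorem lower_solution_L2 (d s ld₁ μ₁ r₂ h b a ε q₁ : ℝ)
    (hd : 0 < d) (hs : 0 < s) (hld : 0 < ld₁) (hμ : 0 < μ₁)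
    (hr₂ : 0 < r₂) (hh : 0 < h) (hb : 0 < b) (ha : 1 < a) (hε : 0 < ε)
    (hh1 : h < 1) (hμ1 : ld₁ < μ₁) (hμ2 : μ₁ < 2 * ld₁)
    (hA1 : d * ld₁ ^ 2 - s * ld₁ + r₂ * (1 - h) = 0)
    (hAμ : d * μ₁ ^ 2 - s * μ₁ + r₂ * (1 - h) < 0)
    (hq : q₁ > max 1 (r₂ * (ε + 1 + b * (2 * a - 1)) /
      (-(d * μ₁ ^ 2 - s * μ₁ + r₂ * (1 - h)))))
    (α : ℝ → ℝ)
    (hα : ∀ z < 0, -ε * Real.exp (ld₁ * z) ≤ α z ∧ α z ≤ 0) :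
    ∀ z < 0, (fun z => Real.exp (ld₁ * z) - q₁ * Real.exp (μ₁ * z)) z > 0 →
      d * deriv (deriv (fun z => Real.exp (ld₁ * z) - q₁ * Real.exp (μ₁ * z))) z
        - s * deriv (fun z => Real.exp (ld₁ * z) - q₁ * Real.exp (μ₁ * z)) z
        + r₂ * (Real.exp (ld₁ * z) - q₁ * Real.exp (μ₁ * z)) *
          (1 + α z - h * (1 - Real.exp (ld₁ * z))
            - (Real.exp (ld₁ * z) - q₁ * Real.exp (μ₁ * z))
            - b * (2 * a - 1) * Real.exp (ld₁ * z)) ≥ 0 := by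
  intro z hz hψ
  simp only at hψ
  rw [deriv2_psi, deriv_psi]
  simp only
  obtain ⟨hα1, hα2⟩ := hα z hz
  have hE1pos : 0 < Real.exp (ld₁ * z) := Real.exp_pos _
  have hE2pos : 0 < Real.exp (μ₁ * z) := Real.exp_pos _
  have hsq : Real.exp (ld₁ * z) ^ 2 ≤ Real.exp (μ₁ * z) := by
    have h2 : Real.exp (2 * ld₁ * z) ≤ Real.exp (μ₁ * z) :=
      Real.exp_le_exp.mpr (by nlinarith)
    have h3 : Real.exp (ld₁ * z) ^ 2 = Real.exp (2 * ld₁ * z) := by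
      rw [sq, ← Real.exp_add]; ring_nf
    linarith
  obtain ⟨E1, hE1⟩ : ∃ E1, E1 = Real.exp (ld₁ * z) := ⟨_, rfl⟩
  obtain ⟨E2, hE2⟩ : ∃ E2, E2 = Real.exp (μ₁ * z) := ⟨_, rfl⟩
  rw [← hE1] at hψ hα1 hsq hE1pos ⊢
  rw [← hE2] at hψ hsq hE2pos ⊢
  obtain ⟨A, hAdef⟩ : ∃ A, A = d * μ₁ ^ 2 - s * μ₁ + r₂ * (1 - h) := ⟨_, rfl⟩
  obtain ⟨C, hCdef⟩ : ∃ C, C = ε + 1 + b * (2 * a - 1) := ⟨_, rfl⟩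
  clear hα hE1 hE2
  rw [← hAdef] at hq hAμ
  rw [← hCdef] at hq
  have hApos : 0 < -A := by linarith
  have hCpos : 0 < C := by nlinarith
  have hqB : r₂ * C < q₁ * (-A) := by
    have h1 : r₂ * C / (-A) < q₁ := lt_of_le_of_lt (le_max_right _ _) hq
    have := (div_lt_iff₀ hApos).mp h1
    linarith
  have hψle : E1 - q₁ * E2 ≤ E1 := by
    have : 0 < q₁ := lt_trans one_pos (lt_of_le_of_lt (le_max_left _ _) hq)
    nlinarith
  have hbr : α z + h * E1 - (E1 - q₁ * E2) - b * (2 * a - 1) * E1 ≥ -C * E1 := by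
    have h1 : 0 ≤ h * E1 := by positivity
    nlinarith
  have hr₂ψ : 0 ≤ r₂ * (E1 - q₁ * E2) := le_of_lt (mul_pos hr₂ hψ)
  have hnl : r₂ * (E1 - q₁ * E2) *
      (α z + h * E1 - (E1 - q₁ * E2) - b * (2 * a - 1) * E1) ≥ -(r₂ * C) * E2 := by
    have h1 : r₂ * (E1 - q₁ * E2) *
        (α z + h * E1 - (E1 - q₁ * E2) - b * (2 * a - 1) * E1) ≥
        r₂ * (E1 - q₁ * E2) * (-C * E1) := mul_le_mul_of_nonneg_left hbr hr₂ψ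
    have hx : (E1 - q₁ * E2) * E1 ≤ E2 := by
      have ha1 := mul_le_mul_of_nonneg_right hψle hE1pos.le
      have ha2 : E1 * E1 = E1 ^ 2 := (sq E1).symm
      linarith
    have h2 : r₂ * (E1 - q₁ * E2) * (-C * E1) ≥ -(r₂ * C) * E2 := by
      have hm := mul_le_mul_of_nonneg_left hx (mul_pos hr₂ hCpos).le
      have heq : r₂ * (E1 - q₁ * E2) * (-C * E1)
          = -(r₂ * C * ((E1 - q₁ * E2) * E1)) := by ring
      have heq2 : -(r₂ * C) * E2 = -(r₂ * C * E2) := by ring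
      linarith
    linarith
  have key : d * (ld₁ * (ld₁ * E1) - q₁ * (μ₁ * (μ₁ * E2)))
      - s * (ld₁ * E1 - q₁ * (μ₁ * E2))
      + r₂ * (E1 - q₁ * E2) * (1 + α z - h * (1 - E1) - (E1 - q₁ * E2)
        - b * (2 * a - 1) * E1)
      = E1 * (d * ld₁ ^ 2 - s * ld₁ + r₂ * (1 - h)) - q₁ * E2 * A
        + r₂ * (E1 - q₁ * E2) *
          (α z + h * E1 - (E1 - q₁ * E2) - b * (2 * a - 1) * E1) := by
    rw [hAdef]; ring
  rw [key, hA1]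
  have hf : r₂ * C * E2 ≤ q₁ * (-A) * E2 :=
    mul_le_mul_of_nonneg_right hqB.le hE2pos.le
  have hg : E1 * 0 - q₁ * E2 * A = q₁ * (-A) * E2 := by ring
  have hh2 : -(r₂ * C) * E2 = -(r₂ * C * E2) := by ring
  linarith
end

section
/- Let d, s, λ₁, r₃, a > 0 with a > 1 and d·λ₁² - s·λ₁ + r₃(a-1) = 0, and let α ≤ 0 on ℝ. Define ψ(z) = (2a-1)e^{λ₁ z}. Then for all z < 0: d·ψ''(z) - s·ψ'(z) + r₃·ψ(z)·[-1 + α(z) + a·1 + a·e^{λ₁ z} - ψ(z)] ≤ 0. -/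
lemma my_deriv_cexp (c ld₁ : ℝ) :
    deriv (fun z => c * Real.exp (ld₁ * z)) = fun z => c * ld₁ * Real.exp (ld₁ * z) := by
  funext z
  have h : HasDerivAt (fun z => c * Real.exp (ld₁ * z)) (c * ld₁ * Real.exp (ld₁ * z)) z := by
    have h1 : HasDerivAt (fun z : ℝ => ld₁ * z) ld₁ z := by
      simpa using (hasDerivAt_id z).const_mul ld₁
    have := (h1.exp).const_mul c
    refine this.congr_deriv ?_
    ring
  exact h.deriv

theorem upper_solution_U3 (d s ld₁ r₃ a : ℝ)
    (hd : 0 < d) (hs : 0 < s) (hld : 0 < ld₁) (hr₃ : 0 < r₃) (ha : 1 < a)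
    (hA1 : d * ld₁ ^ 2 - s * ld₁ + r₃ * (a - 1) = 0)
    (α : ℝ → ℝ) (hα : ∀ z, α z ≤ 0) :
    ∀ z < 0,
      d * deriv (deriv (fun z => (2 * a - 1) * Real.exp (ld₁ * z))) z
        - s * deriv (fun z => (2 * a - 1) * Real.exp (ld₁ * z)) z
        + r₃ * ((2 * a - 1) * Real.exp (ld₁ * z)) *
          (-1 + α z + a * 1 + a * Real.exp (ld₁ * z)
            - (2 * a - 1) * Real.exp (ld₁ * z)) ≤ 0 := by
  intro z hz
  rw [my_deriv_cexp, my_deriv_cexp]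
  set e := Real.exp (ld₁ * z) with he
  have hepos : 0 < e := Real.exp_pos _
  have hα' := hα z
  have key : d * ((2 * a - 1) * ld₁ * ld₁ * e) - s * ((2 * a - 1) * ld₁ * e)
      + r₃ * ((2 * a - 1) * e) * (-1 + α z + a * 1 + a * e - (2 * a - 1) * e)
      = (2 * a - 1) * e * (d * ld₁ ^ 2 - s * ld₁ + r₃ * (a - 1))
        + r₃ * ((2 * a - 1) * e) * (α z + (1 - a) * e) := by ring
  rw [key, hA1]
  have h1 : α z + (1 - a) * e ≤ 0 := by nlinarith
  nlinarith [mul_pos hr₃ (mul_pos (by nlinarith : (0:ℝ) < 2 * a - 1) hepos)]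
end

section
/- Let d, s, λ₁, r₁, r₃, k, b, a, ε > 0 with k > 1, a > 1, d·λ₁² - s·λ₁ + r₃(a-1) = 0, and r₁(ε + k + b(2a-1) - 1) ≤ r₃(a-1). Let α : ℝ → ℝ satisfy α(z) ≥ -ε·e^{λ₁ z} for z < 0. Define ψ(z) = 1 - e^{λ₁ z}. Then for all z < 0: d·ψ''(z) - s·ψ'(z) + r₁·ψ(z)·[1 + α(z) - ψ(z) - k·e^{λ₁ z} - b(2a-1)e^{λ₁ z}] ≥ 0. -/
theorem lower_solution_L1 (d s ld₁ r₁ r₃ k b a ε : ℝ)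
    (hd : 0 < d) (hs : 0 < s) (hld : 0 < ld₁) (hr₁ : 0 < r₁) (hr₃ : 0 < r₃)
    (hk : 1 < k) (hb : 0 < b) (ha : 1 < a) (hε : 0 < ε)
    (hA1 : d * ld₁ ^ 2 - s * ld₁ + r₃ * (a - 1) = 0)
    (hcond : r₁ * (ε + k + b * (2 * a - 1) - 1) ≤ r₃ * (a - 1))
    (α : ℝ → ℝ) (hα : ∀ z < 0, α z ≥ -ε * Real.exp (ld₁ * z)) :
    ∀ z < 0,
      d * deriv (deriv (fun z => 1 - Real.exp (ld₁ * z))) z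
        - s * deriv (fun z => 1 - Real.exp (ld₁ * z)) z
        + r₁ * (1 - Real.exp (ld₁ * z)) *
          (1 + α z - (1 - Real.exp (ld₁ * z)) - k * Real.exp (ld₁ * z)
            - b * (2 * a - 1) * Real.exp (ld₁ * z)) ≥ 0 := by
  have hψ : ∀ z : ℝ, HasDerivAt (fun z => 1 - Real.exp (ld₁ * z))
      (-(Real.exp (ld₁ * z) * ld₁)) z := by
    intro z
    have h1 : HasDerivAt (fun z : ℝ => ld₁ * z) ld₁ z := by
      simpa using (hasDerivAt_id z).const_mul ld₁
    simpa using (h1.exp).const_sub 1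
  have hd1 : deriv (fun z => 1 - Real.exp (ld₁ * z))
      = fun z => -(Real.exp (ld₁ * z) * ld₁) := by
    funext z; exact (hψ z).deriv
  have hψ' : ∀ z : ℝ, HasDerivAt (fun z => -(Real.exp (ld₁ * z) * ld₁))
      (-(Real.exp (ld₁ * z) * ld₁ * ld₁)) z := by
    intro z
    have h1 : HasDerivAt (fun z : ℝ => ld₁ * z) ld₁ z := by
      simpa using (hasDerivAt_id z).const_mul ld₁
    simpa [mul_comm, mul_assoc, Pi.neg_def] using ((h1.exp).mul_const ld₁).neg
  intro z hz
  rw [hd1, (hψ' z).deriv]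
  set E := Real.exp (ld₁ * z) with hE
  have hEpos : 0 < E := Real.exp_pos _
  have hElt : E < 1 := by
    rw [hE]
    exact Real.exp_lt_one_iff.mpr (mul_neg_of_pos_of_neg hld hz)
  have hαz := hα z hz
  set C := k + b * (2 * a - 1) - 1 with hC
  have hCpos : 0 < C := by nlinarith
  -- key: α z - C * E ≥ -(ε + C) * E
  have key : 1 + α z - (1 - E) - k * E - b * (2 * a - 1) * E ≥ -(ε + C) * E := by
    have : α z ≥ -ε * E := hαz
    nlinarith
  have h1E : 0 < 1 - E := by linarith
  have step1 : r₁ * (1 - E) * (1 + α z - (1 - E) - k * E - b * (2 * a - 1) * E)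
      ≥ r₁ * (1 - E) * (-(ε + C) * E) := by
    apply mul_le_mul_of_nonneg_left key (by positivity)
  have step2 : r₁ * (1 - E) * (-(ε + C) * E) ≥ -(r₃ * (a - 1)) * E := by
    have h2 : r₁ * (1 - E) * ((ε + C) * E) ≤ r₁ * ((ε + C) * E) := by
      have := mul_le_mul_of_nonneg_right
        (show r₁ * (1 - E) ≤ r₁ by nlinarith)
        (show (0:ℝ) ≤ (ε + C) * E by positivity)
      linarith
    have h3 : r₁ * ((ε + C) * E) ≤ r₃ * (a - 1) * E := by
      have : r₁ * (ε + C) ≤ r₃ * (a - 1) := by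
        rw [hC]; linarith [hcond]
      nlinarith
    nlinarith
  have hA : d * -(E * ld₁ * ld₁) - s * -(E * ld₁) = r₃ * (a - 1) * E := by
    nlinarith [hA1]
  beta_reduce
  linarith [step1, step2, hA]
end

section
/- Let d, r₃, a > 0 with a > 1, let λ_u = √(r₃(a-1)/d), s = 2dλ_u, and B₀ = λ_u·e. Let r₂, h ∈ (0,∞) with h < 1 and r₂(1-h) = r₃(a-1), and let α ≤ 0. Define ψ(z) = -B₀·z·e^{λ_u z} for z < -1/λ_u. Then for all z < -1/λ_u: d·ψ''(z) - s·ψ'(z) + r₂·ψ(z)·[1 + α(z) - h(1 + B₀ z e^{λ_u z}) - ψ(z)] ≤ 0. -/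
lemma aux_hasDerivAt (b l z : ℝ) :
    HasDerivAt (fun z => -b * z * Real.exp (l * z))
      (-b * Real.exp (l * z) + -b * z * (Real.exp (l * z) * l)) z := by
  have h1 : HasDerivAt (fun z : ℝ => l * z) l z := by
    simpa using (hasDerivAt_id z).const_mul l
  have h3 : HasDerivAt (fun z : ℝ => -b * z) (-b) z := by
    simpa using (hasDerivAt_id z).const_mul (-b)
  exact h3.mul h1.exp

lemma aux_hasDerivAt2 (c₀ c₁ l z : ℝ) :
    HasDerivAt (fun z => (c₀ + c₁ * z) * Real.exp (l * z))
      (c₁ * Real.exp (l * z) + (c₀ + c₁ * z) * (Real.exp (l * z) * l)) z := by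
  have h1 : HasDerivAt (fun z : ℝ => l * z) l z := by
    simpa using (hasDerivAt_id z).const_mul l
  have h3 : HasDerivAt (fun z : ℝ => c₀ + c₁ * z) c₁ z := by
    simpa using ((hasDerivAt_id z).const_mul c₁).const_add c₀
  exact h3.mul h1.exp

theorem upper_solution_U2_critical (d r₃ a r₂ h : ℝ)
    (hd : 0 < d) (hr₃ : 0 < r₃) (ha : 1 < a) (hr₂ : 0 < r₂)
    (hh : 0 < h) (hh1 : h < 1)
    (heq : r₂ * (1 - h) = r₃ * (a - 1))
    (α : ℝ → ℝ) (hα : ∀ z, α z ≤ 0) :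
    let ldu := Real.sqrt (r₃ * (a - 1) / d)
    let s := 2 * d * ldu
    let B₀ := ldu * Real.exp 1
    ∀ z < -1 / ldu,
      d * deriv (deriv (fun z => -B₀ * z * Real.exp (ldu * z))) z
        - s * deriv (fun z => -B₀ * z * Real.exp (ldu * z)) z
        + r₂ * (-B₀ * z * Real.exp (ldu * z)) *
          (1 + α z - h * (1 + B₀ * z * Real.exp (ldu * z))
            - (-B₀ * z * Real.exp (ldu * z))) ≤ 0 := by
  intro ldu s B₀ z hz
  have hls : ldu = Real.sqrt (r₃ * (a - 1) / d) := rfl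
  have hss : s = 2 * d * ldu := rfl
  have hB : B₀ = ldu * Real.exp 1 := rfl
  have harg : 0 < r₃ * (a - 1) / d := div_pos (mul_pos hr₃ (by linarith)) hd
  have hl0 : 0 < ldu := by rw [hls]; exact Real.sqrt_pos.mpr harg
  have hlsq : d * (ldu * ldu) = r₂ * (1 - h) := by
    have : ldu * ldu = r₃ * (a - 1) / d := by
      rw [hls]; exact Real.mul_self_sqrt harg.le
    rw [this]; field_simp; linarith [heq]
  -- first derivative
  have hf : deriv (fun z => -B₀ * z * Real.exp (ldu * z))
      = fun z => (-B₀ + -B₀ * ldu * z) * Real.exp (ldu * z) := by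
    funext w
    rw [(aux_hasDerivAt B₀ ldu w).deriv]; ring
  -- second derivative
  have hf2 : deriv (deriv (fun z => -B₀ * z * Real.exp (ldu * z))) z
      = (-B₀ * ldu * Real.exp (ldu * z)
          + (-B₀ + -B₀ * ldu * z) * (Real.exp (ldu * z) * ldu)) := by
    rw [hf]; exact (aux_hasDerivAt2 (-B₀) (-B₀ * ldu) ldu z).deriv
  rw [hf2, hf]
  have hd1 : deriv (fun z => -B₀ * z * Real.exp (ldu * z)) z
      = (-B₀ + -B₀ * ldu * z) * Real.exp (ldu * z) := by rw [hf]
  -- sign analysis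
  set E := Real.exp (ldu * z) with hE
  have hE0 : 0 < E := Real.exp_pos _
  have hz0 : z < 0 := lt_trans hz (by
    rw [neg_div, neg_lt_zero]; exact div_pos one_pos hl0)
  have hF0 : 0 < -B₀ * z * E := by
    have hB0 : 0 < B₀ := by rw [hB]; positivity
    have : 0 < -B₀ * z := by nlinarith
    positivity
  -- linear part cancels:
  have key : d * (-B₀ * ldu * E + (-B₀ + -B₀ * ldu * z) * (E * ldu))
      - s * ((-B₀ + -B₀ * ldu * z) * E)
      + r₂ * (-B₀ * z * E) * (1 + α z - h * (1 + B₀ * z * E) - (-B₀ * z * E))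
      = r₂ * (-B₀ * z * E) * (α z - (1 - h) * (-B₀ * z * E)) := by
    rw [hss]
    linear_combination (B₀ * z * E) * hlsq
  rw [key]
  have hα0 := hα z
  nlinarith [mul_nonneg (mul_pos hr₂ hF0).le (neg_nonneg.mpr hα0),
    mul_pos (mul_pos hr₂ hF0) hF0]
end

section
/- Let d, s, λ₃, r₁, a, b > 0 with a > 1, and set u_p = (1+b)/(1+ab), w_p = (a-1)/(1+ab). Suppose d·λ₃² - s·λ₃ + r₂β* = 0 where β* = 1 - h u_p - b w_p for some r₂ > 0, 0 < h < 1, and let α ≤ 0. Define ψ(z) = u_p + b·w_p·e^{λ₃ z}. Then for all z < 0 with ψ(z) ≤ 1: d·ψ''(z) - s·ψ'(z) + r₁·ψ(z)·[1 + α(z) - ψ(z) - b·w_p(1 - e^{λ₃ z})] ≤ 0. -/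
theorem upper_solution_U1_Estar (d s ld₃ r₁ r₂ a b h : ℝ)
    (hd : 0 < d) (hs : 0 < s) (hld : 0 < ld₃) (hr₁ : 0 < r₁) (hr₂ : 0 < r₂)
    (ha : 1 < a) (hb : 0 < b) (hh : 0 < h) (hh1 : h < 1)
    (u_p w_p : ℝ) (hu : u_p = (1 + b) / (1 + a * b)) (hw : w_p = (a - 1) / (1 + a * b))
    (hA2 : d * ld₃ ^ 2 - s * ld₃ + r₂ * (1 - h * u_p - b * w_p) = 0)
    (α : ℝ → ℝ) (hα : ∀ z, α z ≤ 0) :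
    ∀ z < 0, (fun z => u_p + b * w_p * Real.exp (ld₃ * z)) z ≤ 1 →
      d * deriv (deriv (fun z => u_p + b * w_p * Real.exp (ld₃ * z))) z
        - s * deriv (fun z => u_p + b * w_p * Real.exp (ld₃ * z)) z
        + r₁ * (u_p + b * w_p * Real.exp (ld₃ * z)) *
          (1 + α z - (u_p + b * w_p * Real.exp (ld₃ * z))
            - b * w_p * (1 - Real.exp (ld₃ * z))) ≤ 0 := by
  have hden : (0:ℝ) < 1 + a * b := by nlinarith
  have hsum : u_p + b * w_p = 1 := by
    rw [hu, hw]; field_simp; ring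
  have h1 : ∀ z : ℝ, HasDerivAt (fun z => u_p + b * w_p * Real.exp (ld₃ * z))
      (b * w_p * ld₃ * Real.exp (ld₃ * z)) z := by
    intro z
    have hl : HasDerivAt (fun z : ℝ => ld₃ * z) ld₃ z := by
      simpa using (hasDerivAt_id z).const_mul ld₃
    have := ((hl.exp).const_mul (b * w_p)).const_add u_p
    exact this.congr_deriv (by ring)
  have h2 : ∀ z : ℝ, HasDerivAt (fun z => b * w_p * ld₃ * Real.exp (ld₃ * z))
      (b * w_p * ld₃ * ld₃ * Real.exp (ld₃ * z)) z := by
    intro z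
    have hl : HasDerivAt (fun z : ℝ => ld₃ * z) ld₃ z := by
      simpa using (hasDerivAt_id z).const_mul ld₃
    have := (hl.exp).const_mul (b * w_p * ld₃)
    exact this.congr_deriv (by ring)
  have hD1 : deriv (fun z => u_p + b * w_p * Real.exp (ld₃ * z))
      = fun z => b * w_p * ld₃ * Real.exp (ld₃ * z) := funext fun z => (h1 z).deriv
  intro z hz hψ
  rw [hD1, (h2 z).deriv]
  have hE : 0 < Real.exp (ld₃ * z) := Real.exp_pos _
  have hwp : 0 < w_p := by rw [hw]; apply div_pos <;> linarith
  have hup : 0 < u_p := by rw [hu]; positivity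
  -- reaction term simplification: 1 - ψ - b w_p (1 - e) = 1 - u_p - b w_p = 0
  have hψpos : 0 < u_p + b * w_p * Real.exp (ld₃ * z) := by positivity
  have hβ : 1 - h * u_p - b * w_p = (1 - h) * u_p := by nlinarith
  have hlin : d * ld₃ ^ 2 - s * ld₃ = -(r₂ * ((1 - h) * u_p)) := by
    rw [← hβ]; linarith
  have hαz := hα z
  have hfac : 1 + α z - (u_p + b * w_p * Real.exp (ld₃ * z))
      - b * w_p * (1 - Real.exp (ld₃ * z)) = α z := by linear_combination -hsum
  rw [hfac]
  simp only
  nlinarith [mul_pos (mul_pos (mul_pos hb hwp) hE)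
      (mul_pos hr₂ (mul_pos (by linarith : (0:ℝ) < 1 - h) hup)),
    mul_nonpos_of_nonneg_of_nonpos (mul_pos hr₁ hψpos).le hαz,
    mul_pos (mul_pos hb hwp) hE]
end

section
/- Let d, s, λ₃, r₂, r₃, a, b, h, ε > 0 with a > 1, 0 < h < 1, u_p = (1+b)/(1+ab), w_p = (a-1)/(1+ab), β* = 1 - h u_p - b w_p, d·λ₃² - s·λ₃ + r₂β* = 0, and r₃(ε + 1) ≤ r₂β*. Let α satisfy α(z) ≥ -ε·e^{λ₃ z} for z < 0. Define ψ(z) = w_p(1 - e^{λ₃ z}) and suppose φ̲₁(z) = u_p(1 - e^{λ₃ z}), φ̲₂(z) ≥ 0. Then for all z < 0: d·ψ''(z) - s·ψ'(z) + r₃·ψ(z)·[-1 + α(z) + a·φ̲₁(z) + a·φ̲₂(z) - ψ(z)] ≥ 0. -/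
/-! With `E = exp (λ₃ z) ∈ (0, 1)` the diffusion part `d ψ'' - s ψ'` equals `r₂ β* w_p E` by the
characteristic equation for `λ₃`. Since `-1 + a u_p - w_p = 0`, the bracket collapses to
`-E + α + a φ̲₂ ≥ -(1 + ε) E`, so the reaction term is at least `-r₃ (1 + ε) w_p E`, which
`r₃ (ε + 1) ≤ r₂ β*` absorbs. -/

open Real

theorem deriv_exp_const_mul (k : ℝ) : deriv (fun z => exp (k * z)) = fun z => k * exp (k * z) := by
  simpa using iteratedDeriv_exp_const_mul 1 k

theorem deriv_const_mul_one_sub_exp (c k : ℝ) :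
    deriv (fun z => c * (1 - exp (k * z))) = fun z => -(c * k * exp (k * z)) := by
  funext z
  simp only [deriv_const_mul_field', deriv_const_sub', deriv_exp_const_mul, mul_neg, neg_inj]
  ring

theorem deriv_deriv_const_mul_one_sub_exp (c k : ℝ) :
    deriv (deriv fun z => c * (1 - exp (k * z))) = fun z => -(c * k ^ 2 * exp (k * z)) := by
  funext z
  simp only [deriv_const_mul_field', deriv_const_sub', deriv_exp_const_mul, mul_neg,
    deriv.fun_neg', neg_inj]
  ring

theorem predator_growth_at_Estar {a b : ℝ} (hab : 1 + a * b ≠ 0) :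
    -1 + a * ((1 + b) / (1 + a * b)) - (a - 1) / (1 + a * b) = 0 := by
  field_simp
  ring

theorem predator_bracket_ge {a u w ε E α φ : ℝ} (hbal : -1 + a * u - w = 0)
    (hα : -ε * E ≤ α) (hφ : 0 ≤ a * φ) :
    -(1 + ε) * E ≤ -1 + α + a * (u * (1 - E)) + a * φ - w * (1 - E) := by
  linear_combination (E - 1) * hbal + hα + hφ

theorem linear_add_reaction_nonneg {r₃ ε w E R B : ℝ} (hr₃ : 0 ≤ r₃) (hε : 0 ≤ 1 + ε)
    (hw : 0 ≤ w) (hE₀ : 0 ≤ E) (hE₁ : E ≤ 1) (hB : -(1 + ε) * E ≤ B) (hR : r₃ * (ε + 1) ≤ R) :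
    0 ≤ R * (w * E) + r₃ * (w * (1 - E)) * B := by
  calc 0 ≤ (R - r₃ * (1 + ε) * (1 - E)) * (w * E) := by
        apply mul_nonneg _ (mul_nonneg hw hE₀)
        nlinarith [mul_nonneg (mul_nonneg hr₃ hε) hE₀]
    _ = R * (w * E) + r₃ * (w * (1 - E)) * (-(1 + ε) * E) := by ring
    _ ≤ R * (w * E) + r₃ * (w * (1 - E)) * B := by gcongr

theorem lower_solution_L3_Estar_general (d s ld₃ r₂ r₃ a b h ε : ℝ)
    (hld : 0 < ld₃) (hr₃ : 0 < r₃)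
    (ha : 1 < a) (hb : 0 < b) (hε : 0 < ε)
    (u_p w_p : ℝ) (hu : u_p = (1 + b) / (1 + a * b)) (hw : w_p = (a - 1) / (1 + a * b))
    (hA2 : d * ld₃ ^ 2 - s * ld₃ + r₂ * (1 - h * u_p - b * w_p) = 0)
    (hcond : r₃ * (ε + 1) ≤ r₂ * (1 - h * u_p - b * w_p))
    (α : ℝ → ℝ) (hα : ∀ z < 0, α z ≥ -ε * Real.exp (ld₃ * z))
    (φ₂ : ℝ → ℝ) (hφ₂ : ∀ z, 0 ≤ φ₂ z) :
    ∀ z < 0,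
      d * deriv (deriv (fun z => w_p * (1 - Real.exp (ld₃ * z)))) z
        - s * deriv (fun z => w_p * (1 - Real.exp (ld₃ * z))) z
        + r₃ * (w_p * (1 - Real.exp (ld₃ * z))) *
          (-1 + α z + a * (u_p * (1 - Real.exp (ld₃ * z))) + a * φ₂ z
            - w_p * (1 - Real.exp (ld₃ * z))) ≥ 0 := by
  intro z hz
  rw [deriv_deriv_const_mul_one_sub_exp, deriv_const_mul_one_sub_exp]
  have hE₀ := exp_pos (ld₃ * z)
  have hE₁ : exp (ld₃ * z) < 1 := exp_lt_one_iff.mpr (mul_neg_of_pos_of_neg hld hz)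
  have hab : 0 < 1 + a * b := by nlinarith
  have hw₀ : 0 ≤ w_p := hw ▸ div_nonneg (by linarith) hab.le
  have hbal : -1 + a * u_p - w_p = 0 := hu ▸ hw ▸ predator_growth_at_Estar hab.ne'
  have hlin : d * -(w_p * ld₃ ^ 2 * exp (ld₃ * z)) - s * -(w_p * ld₃ * exp (ld₃ * z))
      = r₂ * (1 - h * u_p - b * w_p) * (w_p * exp (ld₃ * z)) := by
    linear_combination (-(w_p * exp (ld₃ * z))) * hA2
  have hB := predator_bracket_ge hbal (hα z hz) (mul_nonneg (by linarith) (hφ₂ z))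
  have := linear_add_reaction_nonneg hr₃.le (by linarith) hw₀ hE₀.le hE₁.le hB hcond
  linarith

theorem lower_solution_L3_Estar (d s ld₃ r₂ r₃ a b h ε : ℝ)
    (hd : 0 < d) (hs : 0 < s) (hld : 0 < ld₃) (hr₂ : 0 < r₂) (hr₃ : 0 < r₃)
    (ha : 1 < a) (hb : 0 < b) (hh : 0 < h) (hh1 : h < 1) (hε : 0 < ε)
    (u_p w_p : ℝ) (hu : u_p = (1 + b) / (1 + a * b)) (hw : w_p = (a - 1) / (1 + a * b))
    (hA2 : d * ld₃ ^ 2 - s * ld₃ + r₂ * (1 - h * u_p - b * w_p) = 0)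
    (hcond : r₃ * (ε + 1) ≤ r₂ * (1 - h * u_p - b * w_p))
    (α : ℝ → ℝ) (hα : ∀ z < 0, α z ≥ -ε * Real.exp (ld₃ * z))
    (φ₂ : ℝ → ℝ) (hφ₂ : ∀ z, 0 ≤ φ₂ z) :
    ∀ z < 0,
      d * deriv (deriv (fun z => w_p * (1 - Real.exp (ld₃ * z)))) z
        - s * deriv (fun z => w_p * (1 - Real.exp (ld₃ * z))) z
        + r₃ * (w_p * (1 - Real.exp (ld₃ * z))) *
          (-1 + α z + a * (u_p * (1 - Real.exp (ld₃ * z))) + a * φ₂ z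
            - w_p * (1 - Real.exp (ld₃ * z))) ≥ 0 :=
  lower_solution_L3_Estar_general d s ld₃ r₂ r₃ a b h ε hld hr₃ ha hb hε u_p w_p hu hw hA2 hcond α
    hα φ₂ hφ₂
end

section
/- Let d, s, r₁ > 0 and let α : ℝ → ℝ be continuous with limsup_{z→+∞} α(z) < -1 and α ≤ 0. Let φ̲₂ : ℝ → ℝ be continuous, positive, with φ̲₂(-∞) = γ₂ > 0 and φ̲₂(z) ≥ γ₂(1 - e^{λ₀z}) for z < 0 (some λ₀ > 0), and let φ̲₃ ≥ 0. Then there exists k₀ > 0 such that for all k ≥ k₀: 1 + α(z) - φ₁(z) - k·φ̲₂(z) - b·φ̲₃(z) < 0 for every z ∈ ℝ and every function φ₁ with 0 ≤ φ₁ ≤ 1. Consequently, any bounded C² solution φ₁ ≥ 0 of d·φ₁'' - s·φ₁' + r₁·φ₁·[1 + α - φ₁ - k·φ̲₂ - b·φ̲₃] ≥ 0 with φ₁(±∞) = 0 must satisfy φ₁ ≡ 0. -/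
open Filter Set Topology

lemma second_deriv_nonpos_at_max {f : ℝ → ℝ} {x : ℝ} (hf : ContDiff ℝ 2 f)
    (hmax : ∀ y, f y ≤ f x) : deriv (deriv f) x ≤ 0 := by
  by_contra h
  push_neg at h
  have hdf : Differentiable ℝ f := hf.differentiable (by norm_num)
  have hdf1 : Differentiable ℝ (deriv f) := by
    have := (contDiff_succ_iff_deriv (n := 1)).mp (by exact_mod_cast hf)
    exact this.2.2.differentiable one_ne_zero
  have hloc : IsLocalMax f x := Filter.Eventually.of_forall hmax
  have h0 : deriv f x = 0 := hloc.deriv_eq_zero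
  have hg : HasDerivAt (deriv f) (deriv (deriv f) x) x := (hdf1 x).hasDerivAt
  rw [hasDerivAt_iff_tendsto_slope] at hg
  have hg' : Tendsto (slope (deriv f) x) (𝓝[>] x) (𝓝 (deriv (deriv f) x)) :=
    hg.mono_left (nhdsWithin_mono x (fun y hy => ne_of_gt hy))
  have hpos : ∀ᶠ y in 𝓝[>] x, 0 < deriv f y := by
    filter_upwards [hg'.eventually (eventually_gt_nhds h), self_mem_nhdsWithin] with y hy hy'
    have hxy : 0 < y - x := sub_pos.mpr hy'
    have : 0 < (y - x)⁻¹ * (deriv f y - deriv f x) := hy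
    rw [h0, sub_zero] at this
    have h3 := mul_pos hxy this
    rwa [← mul_assoc, mul_inv_cancel₀ hxy.ne', one_mul] at h3
  obtain ⟨c, hc, hcpos⟩ := (nhdsGT_basis x).eventually_iff.mp hpos
  have hmono : StrictMonoOn f (Icc x c) := by
    apply strictMonoOn_of_deriv_pos (convex_Icc x c) hdf.continuous.continuousOn
    intro y hy
    rw [interior_Icc] at hy
    exact hcpos hy
  have := hmono (left_mem_Icc.mpr hc.le) (right_mem_Icc.mpr hc.le) hc
  exact absurd (hmax c) (not_le.mpr this)

theorem weak_prey_extinction (d s r₁ b γ₂ ld₀ : ℝ)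
    (hd : 0 < d) (hs : 0 < s) (hr₁ : 0 < r₁) (hb : 0 < b) (hγ₂ : 0 < γ₂) (hld₀ : 0 < ld₀)
    (α : ℝ → ℝ) (hαcont : Continuous α)
    (hαlimsup : Filter.limsup α Filter.atTop < -1) (hαnonpos : ∀ z, α z ≤ 0)
    (φ₂ : ℝ → ℝ) (hφ₂cont : Continuous φ₂) (hφ₂pos : ∀ z, 0 < φ₂ z)
    (hφ₂lim : Filter.Tendsto φ₂ Filter.atBot (nhds γ₂))
    (hφ₂low : ∀ z < 0, φ₂ z ≥ γ₂ * (1 - Real.exp (ld₀ * z)))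
    (φ₃ : ℝ → ℝ) (hφ₃ : ∀ z, 0 ≤ φ₃ z) :
    ∃ k₀ > 0, ∀ k ≥ k₀,
      (∀ z : ℝ, ∀ v : ℝ, 0 ≤ v → v ≤ 1 →
        1 + α z - v - k * φ₂ z - b * φ₃ z < 0) ∧
      ∀ φ₁ : ℝ → ℝ, ContDiff ℝ 2 φ₁ → (∀ z, 0 ≤ φ₁ z) → (∀ z, φ₁ z ≤ 1) →
        (∀ z, d * deriv (deriv φ₁) z - s * deriv φ₁ z
          + r₁ * φ₁ z * (1 + α z - φ₁ z - k * φ₂ z - b * φ₃ z) ≥ 0) →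
        Filter.Tendsto φ₁ Filter.atTop (nhds 0) →
        Filter.Tendsto φ₁ Filter.atBot (nhds 0) →
        ∀ z, φ₁ z = 0 := by
  -- eventually α z < -1
  have hbdd : Filter.IsBoundedUnder (· ≤ ·) Filter.atTop α :=
    ⟨0, Filter.eventually_map.mpr (Filter.Eventually.of_forall hαnonpos)⟩
  have hev : ∀ᶠ z in Filter.atTop, α z < -1 :=
    Filter.eventually_lt_of_limsup_lt hαlimsup hbdd
  obtain ⟨M, hM⟩ := Filter.eventually_atTop.mp hev
  set Z₀ : ℝ := -(Real.log 2) / ld₀ with hZ₀def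
  have hlog2 : 0 < Real.log 2 := Real.log_pos one_lt_two
  have hZ₀neg : Z₀ < 0 := div_neg_of_neg_of_pos (neg_neg_of_pos hlog2) hld₀
  -- lower bound on (-∞, Z₀]
  have hlow1 : ∀ z ≤ Z₀, γ₂ / 2 ≤ φ₂ z := by
    intro z hz
    have hzneg : z < 0 := lt_of_le_of_lt hz hZ₀neg
    have hexp : Real.exp (ld₀ * z) ≤ 1 / 2 := by
      have : ld₀ * z ≤ ld₀ * Z₀ := mul_le_mul_of_nonneg_left hz hld₀.le
      have hZ : ld₀ * Z₀ = -(Real.log 2) := by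
        rw [hZ₀def, mul_div_assoc']
        exact mul_div_cancel_left₀ _ hld₀.ne'
      calc Real.exp (ld₀ * z) ≤ Real.exp (-(Real.log 2)) := by
            rw [← hZ]; exact Real.exp_le_exp.mpr this
        _ = 1 / 2 := by
            rw [Real.exp_neg, Real.exp_log two_pos]; norm_num
    have := hφ₂low z hzneg
    nlinarith
  set M' : ℝ := max M Z₀ with hM'def
  have hZM : Z₀ ≤ M' := le_max_right _ _
  obtain ⟨zmin, hzmem, hzmin⟩ := isCompact_Icc.exists_isMinOn (Set.nonempty_Icc.mpr hZM)
    hφ₂cont.continuousOn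
  set m : ℝ := min (γ₂ / 2) (φ₂ zmin) with hmdef
  have hm : 0 < m := lt_min (by positivity) (hφ₂pos zmin)
  have hlow : ∀ z ≤ M', m ≤ φ₂ z := by
    intro z hz
    rcases le_or_gt z Z₀ with h | h
    · exact le_trans (min_le_left _ _) (hlow1 z h)
    · exact le_trans (min_le_right _ _) (hzmin ⟨h.le, hz⟩)
  refine ⟨2 / m, by positivity, fun k hk => ?_⟩
  have hk0 : 0 < k := lt_of_lt_of_le (by positivity) hk
  have hneg : ∀ z : ℝ, ∀ v : ℝ, 0 ≤ v → v ≤ 1 →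
      1 + α z - v - k * φ₂ z - b * φ₃ z < 0 := by
    intro z v hv0 _
    have hbφ₃ : 0 ≤ b * φ₃ z := mul_nonneg hb.le (hφ₃ z)
    rcases le_or_gt z M' with h | h
    · have h1 : (2 : ℝ) ≤ k * φ₂ z := by
        calc (2 : ℝ) = (2 / m) * m := by field_simp
          _ ≤ k * φ₂ z := mul_le_mul hk (hlow z h) hm.le hk0.le
      have := hαnonpos z
      linarith
    · have hα : α z < -1 := hM z (le_trans (le_max_left _ _) h.le)
      have : 0 < k * φ₂ z := mul_pos hk0 (hφ₂pos z)
      linarith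
  refine ⟨hneg, fun φ₁ hC h0 h1 hode htop hbot z => ?_⟩
  by_contra hz
  have hzpos : 0 < φ₁ z := lt_of_le_of_ne (h0 z) (Ne.symm hz)
  -- φ₁ tends to 0 at cocompact
  have hcc : Tendsto φ₁ (cocompact ℝ) (𝓝 0) := by
    rw [cocompact_eq_atBot_atTop]
    exact Tendsto.sup hbot htop
  have hev' : ∀ᶠ x in cocompact ℝ, φ₁ x ≤ φ₁ z :=
    (hcc.eventually_lt_const hzpos).mono fun x hx => hx.le
  obtain ⟨x, hx⟩ := hC.continuous.exists_forall_ge' z hev'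
  have hxpos : 0 < φ₁ x := lt_of_lt_of_le hzpos (hx z)
  have hd2 : deriv (deriv φ₁) x ≤ 0 := second_deriv_nonpos_at_max hC hx
  have hloc : IsLocalMax φ₁ x := Filter.Eventually.of_forall hx
  have hd1 : deriv φ₁ x = 0 := hloc.deriv_eq_zero
  have hR : 1 + α x - φ₁ x - k * φ₂ x - b * φ₃ x < 0 := hneg x (φ₁ x) (h0 x) (h1 x)
  have := hode x
  rw [hd1] at this
  nlinarith [mul_pos hr₁ hxpos, mul_pos (mul_pos hr₁ hxpos) (neg_pos.mpr hR)]
end
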